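/- arXiv:1810.09046 — 6 statements merged into one kernel-verified Lean document; each statement's English description precedes it below -/
import Mathlib

section
/- Self-duality of the future causal cone in Minkowski space: for every x ∈ ℝ⁴, one has η(x,y) ≥ 0 for all future causal y if and only if x is itself future causal. -/
open Matrix MeasureTheory Filter Topology

noncomputable section

abbrev Vec4 : Type := Fin 4 → ℝ
abbrev Mat4 : Type := Matrix (Fin 4) (Fin 4) ℝ

/-- The Minkowski inner product on ℝ⁴. -/
def mink (x y : Vec4) : ℝ := x 0 * y 0 - x 1 * y 1 - x 2 * y 2 - x 3 * y 3

/-- The matrix diag(1,-1,-1,-1). -/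
def E : Mat4 := Matrix.diagonal ![1, -1, -1, -1]

def FutureCausal (x : Vec4) : Prop := 0 ≤ mink x x ∧ 0 ≤ x 0
def FutureTimelike (x : Vec4) : Prop := 0 < mink x x ∧ 0 < x 0
def FutureNull (x : Vec4) : Prop := x ≠ 0 ∧ mink x x = 0 ∧ 0 < x 0
def UnitTimelike (x : Vec4) : Prop := FutureTimelike x ∧ mink x x = 1

/-- The dominant energy condition for a matrix. -/
def DEC (T : Mat4) : Prop :=
  ∀ ξ ζ : Vec4, FutureCausal ξ → FutureCausal ζ → 0 ≤ ∑ i, ∑ j, ξ i * T i j * ζ j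

/-- ⟨T, x⟩ = Σᵢⱼ T i j * x i j. -/
def minner (T x : Mat4) : ℝ := ∑ i, ∑ j, T i j * x i j

/-- The cone D of finite sums of symmetrized products of future causal vectors. -/
def coneD : Set Mat4 :=
  { x | ∃ (n : ℕ) (ξ ζ : Fin n → Vec4),
      (∀ k, FutureCausal (ξ k)) ∧ (∀ k, FutureCausal (ζ k)) ∧
      x = ∑ k, (1/2 : ℝ) • (vecMulVec (ξ k) (ζ k) + vecMulVec (ζ k) (ξ k)) }

/-- A symmetric matrix is generic if it lies in the interior of D, taken within
the space of symmetric matrices. -/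
def Generic (x : Mat4) : Prop :=
  ∃ h : xᵀ = x, (⟨x, h⟩ : { A : Mat4 // Aᵀ = A }) ∈
    interior { A : { A : Mat4 // Aᵀ = A } | A.val ∈ coneD }

/-- Partial derivative in the a-th coordinate direction. -/
def pd (a : Fin 4) (f : Vec4 → ℝ) (p : Vec4) : ℝ := fderiv ℝ f p (Pi.single a 1)

def SmoothMatField (T : Vec4 → Mat4) : Prop := ∀ a b, ContDiff ℝ (⊤ : ℕ∞) fun p => T p a b
def SymValued (T : Vec4 → Mat4) : Prop := ∀ p, (T p)ᵀ = T p
def DivFree (T : Vec4 → Mat4) : Prop := ∀ p b, ∑ a, pd a (fun q => T q a b) p = 0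

/-- A collection of fields tracks a curve. -/
def Tracks (C : Set (Vec4 → Mat4)) (γ : ℝ → Vec4) : Prop :=
  ∀ x : Vec4 → Mat4, SmoothMatField x → HasCompactSupport x → SymValued x →
    (∃ O : Set Vec4, IsOpen O ∧ Set.range γ ⊆ O ∧ ∀ p ∈ O, x p ∈ coneD) →
    (∃ t₀ : ℝ, Generic (x (γ t₀))) →
    ∃ T ∈ C, 0 < ∫ p, minner (T p) (x p)

/-- Maxwell stress-energy tensor of a field strength matrix. -/
def maxwellT (F : Mat4) : Mat4 :=
  F * E * F - ((1/4 : ℝ) * (E * F * E * F).trace) • E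

/-- Source-free Maxwell equations. -/
def SolvesMaxwell (F : Vec4 → Mat4) : Prop :=
  (∀ p b, ∑ a, E a a * pd a (fun q => F q a b) p = 0) ∧
  (∀ p a b c, pd a (fun q => F q b c) p + pd b (fun q => F q c a) p
      + pd c (fun q => F q a b) p = 0)

/-- Klein–Gordon stress-energy tensor. -/
def kgT (φ : Vec4 → ℝ) (m : ℝ) (p : Vec4) : Mat4 :=
  Matrix.of fun a b =>
    pd a φ p * pd b φ p
      - (1/2 : ℝ) * E a b * ((∑ c, E c c * (pd c φ p)^2) - m^2 * (φ p)^2)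

/-- Mass-m Klein–Gordon equation. -/
def SolvesKG (φ : Vec4 → ℝ) (m : ℝ) : Prop :=
  ∀ p, pd 0 (pd 0 φ) p - pd 1 (pd 1 φ) p - pd 2 (pd 2 φ) p - pd 3 (pd 3 φ) p
    + m^2 * φ p = 0

/-- Self-duality of the future causal cone in Minkowski space. -/
theorem future_causal_cone_self_dual (x : Vec4) :
    (∀ y : Vec4, FutureCausal y → 0 ≤ mink x y) ↔ FutureCausal x := by
  constructor
  · intro h
    set s := Real.sqrt (x 1 ^ 2 + x 2 ^ 2 + x 3 ^ 2) with hs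
    have hs0 : 0 ≤ s := Real.sqrt_nonneg _
    have hs2 : s ^ 2 = x 1 ^ 2 + x 2 ^ 2 + x 3 ^ 2 := by
      rw [hs, Real.sq_sqrt]; positivity
    have h0 : 0 ≤ x 0 := by
      have := h ![1, 0, 0, 0] ⟨by norm_num [mink, Matrix.cons_val_two, Matrix.cons_val_three, Matrix.tail_cons, Matrix.head_cons], by norm_num⟩
      simpa [mink] using this
    have h1 : 0 ≤ mink x ![s, x 1, x 2, x 3] := by
      refine h _ ⟨?_, by simpa using hs0⟩
      simp only [mink]
      simp only [Matrix.cons_val_zero, Matrix.cons_val_one, Matrix.head_cons,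
        Matrix.cons_val_two, Matrix.tail_cons, Matrix.cons_val_three]
      nlinarith
    have h1' : 0 ≤ x 0 * s - s ^ 2 := by
      simp only [mink, Matrix.cons_val_zero, Matrix.cons_val_one, Matrix.head_cons,
        Matrix.cons_val_two, Matrix.tail_cons, Matrix.cons_val_three] at h1
      nlinarith
    refine ⟨?_, h0⟩
    have : s ^ 2 ≤ x 0 ^ 2 := by nlinarith
    simp only [mink]; nlinarith
  · intro ⟨hx, hx0⟩ y ⟨hy, hy0⟩
    simp only [mink] at *
    nlinarith [sq_nonneg (x 1 * y 2 - x 2 * y 1), sq_nonneg (x 1 * y 3 - x 3 * y 1),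
      sq_nonneg (x 2 * y 3 - x 3 * y 2), sq_nonneg (x 1 * y 1 + x 2 * y 2 + x 3 * y 3),
      mul_nonneg hx0 hy0, sq_nonneg (x 0 * y 0 - x 1 * y 1 - x 2 * y 2 - x 3 * y 3),
      mul_nonneg (mul_nonneg hx0 hx0) (mul_nonneg hy0 hy0),
      sq_nonneg (x 0 * y 0 + x 1 * y 1 + x 2 * y 2 + x 3 * y 3)]
end
end

section
/- Energy density dominates all components: if T ∈ Matrix (Fin 4) (Fin 4) ℝ is symmetric and satisfies the dominant energy condition, then |T i j| ≤ T 0 0 for all indices i, j. (This is the pointwise core of the proposition that a symmetric distribution satisfying the dominant energy condition is order zero.) -/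
open Matrix MeasureTheory Filter Topology

noncomputable section

private def vv (s : ℝ) (i : Fin 4) : Vec4 :=
  fun k => (if k = 0 then 1 else 0) + (if k = i then s else 0)

private lemma fc_vv (s : ℝ) (hs : s = 1 ∨ s = -1) (i : Fin 4) : FutureCausal (vv s i) := by
  fin_cases i <;> rcases hs with rfl | rfl <;>
    constructor <;> simp (config := { decide := true }) [vv, mink]

private lemma q_vv (T : Mat4) (s t : ℝ) (i j : Fin 4) :
    ∑ a, ∑ b, vv s i a * T a b * vv t j b
      = T 0 0 + t * T 0 j + s * T i 0 + s * t * T i j := by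
  simp only [vv, add_mul, mul_add, Finset.sum_add_distrib, ite_mul, one_mul, zero_mul,
    mul_ite, mul_zero, mul_one, Finset.sum_ite_eq, Finset.sum_ite_eq', Finset.mem_univ,
    if_true]
  ring

/-- Energy density dominates all components. -/
theorem dec_energy_dominates (T : Mat4) (hsym : Tᵀ = T) (hdec : DEC T) :
    ∀ i j : Fin 4, |T i j| ≤ T 0 0 := by
  intro i j
  have h := fun (s t : ℝ) (hs : s = 1 ∨ s = -1) (ht : t = 1 ∨ t = -1) => by
    have := hdec (vv s i) (vv t j) (fc_vv s hs i) (fc_vv t ht j)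
    rw [q_vv] at this
    exact this
  have h11 := h 1 1 (Or.inl rfl) (Or.inl rfl)
  have h1m := h 1 (-1) (Or.inl rfl) (Or.inr rfl)
  have hm1 := h (-1) 1 (Or.inr rfl) (Or.inl rfl)
  have hmm := h (-1) (-1) (Or.inr rfl) (Or.inr rfl)
  rw [abs_le]
  constructor <;> linarith
end
end

section
/- Duality of the energy cones: a symmetric matrix T ∈ Matrix (Fin 4) (Fin 4) ℝ satisfies the dominant energy condition if and only if ⟨T, x⟩ ≥ 0 for every symmetric matrix x satisfying the dual energy condition (i.e., for every x ∈ D). -/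
open Matrix MeasureTheory Filter Topology

noncomputable section

/-- Duality of the energy cones. -/
theorem dec_iff_dual_pairing (T : Mat4) (hsym : Tᵀ = T) :
    DEC T ↔ ∀ x : Mat4, xᵀ = x → x ∈ coneD → 0 ≤ minner T x := by
  have hT : ∀ i j, T j i = T i j := by
    intro i j
    have := congrFun (congrFun hsym i) j
    simpa [Matrix.transpose_apply] using this
  have key : ∀ ξ ζ : Vec4,
      minner T ((1/2 : ℝ) • (vecMulVec ξ ζ + vecMulVec ζ ξ))
        = ∑ i, ∑ j, ξ i * T i j * ζ j := by
    intro ξ ζ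
    have hswap : ∑ i, ∑ j, T i j * (ζ i * ξ j) = ∑ i, ∑ j, T i j * (ξ i * ζ j) := by
      rw [Finset.sum_comm]
      refine Finset.sum_congr rfl fun i _ => Finset.sum_congr rfl fun j _ => ?_
      rw [hT j i]; ring
    have expand : ∀ i j : Fin 4, T i j * ((1/2 : ℝ) * (ξ i * ζ j + ζ i * ξ j))
        = (1/2) * (T i j * (ξ i * ζ j)) + (1/2) * (T i j * (ζ i * ξ j)) := by
      intro i j; ring
    simp only [minner, Matrix.smul_apply, Matrix.add_apply, vecMulVec_apply,
      smul_eq_mul, expand, Finset.sum_add_distrib, ← Finset.mul_sum]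
    rw [hswap]
    have : ∑ i, ∑ j, T i j * (ξ i * ζ j) = ∑ i, ∑ j, ξ i * T i j * ζ j :=
      Finset.sum_congr rfl fun i _ => Finset.sum_congr rfl fun j _ => by ring
    rw [this]; ring
  constructor
  · intro hDEC x _ hx
    obtain ⟨n, ξ, ζ, hξ, hζ, rfl⟩ := hx
    have minner_sum : ∀ (f : Fin n → Mat4),
        minner T (∑ k, f k) = ∑ k, minner T (f k) := by
      intro f
      simp only [minner, Matrix.sum_apply, Finset.mul_sum]
      calc ∑ i, ∑ j, ∑ k, T i j * f k i j
          = ∑ i, ∑ k, ∑ j, T i j * f k i j :=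
            Finset.sum_congr rfl fun i _ => Finset.sum_comm
        _ = ∑ k, ∑ i, ∑ j, T i j * f k i j := Finset.sum_comm
    rw [minner_sum]
    refine Finset.sum_nonneg fun k _ => ?_
    rw [key]
    exact hDEC (ξ k) (ζ k) (hξ k) (hζ k)
  · intro h ξ ζ hξ hζ
    set x : Mat4 := (1/2 : ℝ) • (vecMulVec ξ ζ + vecMulVec ζ ξ) with hxdef
    have hxs : xᵀ = x := by
      ext i j
      simp only [hxdef, Matrix.transpose_apply, Matrix.smul_apply, Matrix.add_apply,
        vecMulVec_apply, smul_eq_mul]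
      ring
    have hxD : x ∈ coneD := by
      refine ⟨1, fun _ => ξ, fun _ => ζ, fun _ => hξ, fun _ => hζ, ?_⟩
      simp [hxdef]
    have := h x hxs hxD
    rwa [hxdef, key] at this
end
end

section
/- The Maxwell stress-energy tensor satisfies the dominant energy condition pointwise: for every antisymmetric matrix F ∈ Matrix (Fin 4) (Fin 4) ℝ (Fᵀ = −F), the matrix T = F * E * F − (1/4) * trace(E * F * E * F) • E is symmetric and satisfies the dominant energy condition. -/
open Matrix MeasureTheory Filter Topology

noncomputable section

lemma auxCS (A s1 s2 s3 z0 z1 z2 z3 : ℝ) (hA : 0 ≤ A)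
    (hk : s1^2+s2^2+s3^2 ≤ A^2)
    (hz : z1^2+z2^2+z3^2 ≤ z0^2) (hz0 : 0 ≤ z0) :
    0 ≤ A*z0 + s1*z1 + s2*z2 + s3*z3 := by
  nlinarith [sq_nonneg (s1*z2 - s2*z1), sq_nonneg (s1*z3 - s3*z1), sq_nonneg (s2*z3 - s3*z2),
    sq_nonneg (A*z0 + s1*z1 + s2*z2 + s3*z3), mul_nonneg hA hz0,
    sq_nonneg (s1*z1+s2*z2+s3*z3)]

set_option maxHeartbeats 2000000 in
/-- The Maxwell stress-energy tensor satisfies the DEC pointwise. -/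
theorem maxwellT_symm_and_dec (F : Mat4) (hF : Fᵀ = -F) :
    (maxwellT F)ᵀ = maxwellT F ∧ DEC (maxwellT F) := by
  have hji : ∀ i j : Fin 4, F j i = - F i j := by
    intro i j
    have := congrFun (congrFun hF i) j
    simpa [Matrix.transpose_apply] using this
  have h00 : F 0 0 = 0 := by have := hji 0 0; linarith
  have h11 : F 1 1 = 0 := by have := hji 1 1; linarith
  have h22 : F 2 2 = 0 := by have := hji 2 2; linarith
  have h33 : F 3 3 = 0 := by have := hji 3 3; linarith
  have h10 : F 1 0 = -F 0 1 := hji 0 1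
  have h20 : F 2 0 = -F 0 2 := hji 0 2
  have h30 : F 3 0 = -F 0 3 := hji 0 3
  have h21 : F 2 1 = -F 1 2 := hji 1 2
  have h31 : F 3 1 = -F 1 3 := hji 1 3
  have h32 : F 3 2 = -F 2 3 := hji 2 3
  constructor
  · have hE : Eᵀ = E := by
      simp [E]
    simp only [maxwellT, Matrix.transpose_sub, Matrix.transpose_smul, Matrix.transpose_mul,
      hE, hF, Matrix.neg_mul, Matrix.mul_neg, neg_neg, Matrix.mul_assoc]
  · intro ξ ζ hξ hζ
    obtain ⟨hξm, hξ0⟩ := hξ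
    obtain ⟨hζm, hζ0⟩ := hζ
    simp only [mink] at hξm hζm
    set T := maxwellT F with hT
    -- expansion helper
    have hexp : ∀ i j : Fin 4, T i j = (F * E * F) i j - ((1/4 : ℝ) * (E * F * E * F).trace) * E i j := by
      intro i j; simp [hT, maxwellT, Matrix.sub_apply]
    have hzζ : ζ 1^2 + ζ 2^2 + ζ 3^2 ≤ ζ 0^2 := by nlinarith [hζm]
    have hzζ' : (0:ℝ) ≤ ζ 0^2 - ζ 1^2 - ζ 2^2 - ζ 3^2 := by linarith
    have hzξ : ξ 1^2 + ξ 2^2 + ξ 3^2 ≤ ξ 0^2 := by nlinarith [hξm]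
    -- T00 nonneg
    have hT00 : 0 ≤ T 0 0 := by
      have hident : T 0 0 = (F 0 1^2 + F 0 2^2 + F 0 3^2 + F 1 2^2 + F 1 3^2 + F 2 3^2)/2 := by
        rw [hexp]
        simp [Matrix.mul_apply, Matrix.trace, Matrix.diag, E, Matrix.diagonal,
          Fin.sum_univ_four, h00, h11, h22, h33, h10, h20, h30, h21, h31, h32]
        ring
      rw [hident]; positivity
    -- row-0 causal: T00^2 ≥ T01^2+T02^2+T03^2
    have hk1 : (T 0 1)^2 + (T 0 2)^2 + (T 0 3)^2 ≤ (T 0 0)^2 := by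
      have hident : (T 0 0)^2 - (T 0 1)^2 - (T 0 2)^2 - (T 0 3)^2 =
          ((F 0 1^2 + F 0 2^2 + F 0 3^2 - F 1 2^2 - F 1 3^2 - F 2 3^2)/2)^2
            + (F 0 1 * F 2 3 - F 0 2 * F 1 3 + F 0 3 * F 1 2)^2 := by
        rw [hexp, hexp, hexp, hexp]
        simp [Matrix.mul_apply, Matrix.trace, Matrix.diag, E, Matrix.diagonal,
          Fin.sum_univ_four, h00, h11, h22, h33, h10, h20, h30, h21, h31, h32]
        ring
      linarith [hident,
        sq_nonneg ((F 0 1^2 + F 0 2^2 + F 0 3^2 - F 1 2^2 - F 1 3^2 - F 2 3^2)/2),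
        sq_nonneg (F 0 1 * F 2 3 - F 0 2 * F 1 3 + F 0 3 * F 1 2)]
    set w : Fin 4 → ℝ := fun i => ∑ j, T i j * ζ j with hw
    have hw0 : w 0 = T 0 0 * ζ 0 + T 0 1 * ζ 1 + T 0 2 * ζ 2 + T 0 3 * ζ 3 := by
      simp [hw, Fin.sum_univ_four]
    have hA : 0 ≤ w 0 := by
      rw [hw0]; exact auxCS _ _ _ _ _ _ _ _ hT00 hk1 hzζ hζ0
    -- key identity: mink w w = kappa^2 * mink zeta zeta
    have hid : w 0^2 - (w 1^2 + w 2^2 + w 3^2) =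
        (((F 0 1^2 + F 0 2^2 + F 0 3^2 - F 1 2^2 - F 1 3^2 - F 2 3^2)/2)^2
          + (F 0 1 * F 2 3 - F 0 2 * F 1 3 + F 0 3 * F 1 2)^2)
          * (ζ 0^2 - ζ 1^2 - ζ 2^2 - ζ 3^2) := by
      simp only [hw, Fin.sum_univ_four, hexp]
      simp [Matrix.mul_apply, Matrix.trace, Matrix.diag, E, Matrix.diagonal,
        Fin.sum_univ_four, h00, h11, h22, h33, h10, h20, h30, h21, h31, h32]
      ring
    have hk2 : w 1^2 + w 2^2 + w 3^2 ≤ w 0^2 := by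
      have hprod : (0:ℝ) ≤ (((F 0 1^2 + F 0 2^2 + F 0 3^2 - F 1 2^2 - F 1 3^2 - F 2 3^2)/2)^2
            + (F 0 1 * F 2 3 - F 0 2 * F 1 3 + F 0 3 * F 1 2)^2)
          * (ζ 0^2 - ζ 1^2 - ζ 2^2 - ζ 3^2) :=
        mul_nonneg (by positivity) hzζ'
      have h2 : (0:ℝ) ≤ w 0^2 - (w 1^2 + w 2^2 + w 3^2) := by rw [hid]; exact hprod
      exact sub_nonneg.mp h2
    have hfin : (∑ i, ∑ j, ξ i * T i j * ζ j) = w 0 * ξ 0 + w 1 * ξ 1 + w 2 * ξ 2 + w 3 * ξ 3 := by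
      simp only [hw, Fin.sum_univ_four]
      ring
    rw [hfin]
    exact auxCS _ _ _ _ _ _ _ _ hA hk2 hzξ hξ0
end
end

section
/- The Maxwell stress-energy tensor is divergence-free on-shell: if F : ℝ⁴ → Matrix (Fin 4) (Fin 4) ℝ is a smooth field with antisymmetric values solving the source-free Maxwell equations, then its stress-energy tensor T[F] satisfies Σₐ E a a * ∂T[F] a b/∂p a (p) = 0 for every p ∈ ℝ⁴ and every index b. -/
open Matrix MeasureTheory Filter Topology

noncomputable section

lemma E00 : E 0 0 = 1 := by simp [E, Matrix.diagonal_apply]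
lemma E01 : E 0 1 = 0 := by simp [E, Matrix.diagonal_apply]
lemma E02 : E 0 2 = 0 := by simp [E, Matrix.diagonal_apply]
lemma E03 : E 0 3 = 0 := by simp [E, Matrix.diagonal_apply]
lemma E10 : E 1 0 = 0 := by simp [E, Matrix.diagonal_apply]
lemma E11 : E 1 1 = -1 := by simp [E, Matrix.diagonal_apply]
lemma E12 : E 1 2 = 0 := by simp [E, Matrix.diagonal_apply]
lemma E13 : E 1 3 = 0 := by simp [E, Matrix.diagonal_apply]
lemma E20 : E 2 0 = 0 := by simp [E, Matrix.diagonal_apply]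
lemma E21 : E 2 1 = 0 := by simp [E, Matrix.diagonal_apply]
lemma E22 : E 2 2 = -1 := by simp [E, Matrix.diagonal_apply]
lemma E23 : E 2 3 = 0 := by simp [E, Matrix.diagonal_apply]
lemma E30 : E 3 0 = 0 := by simp [E, Matrix.diagonal_apply]
lemma E31 : E 3 1 = 0 := by simp [E, Matrix.diagonal_apply]
lemma E32 : E 3 2 = 0 := by simp [E, Matrix.diagonal_apply]
lemma E33 : E 3 3 = -1 := by simp [E, Matrix.diagonal_apply]

lemma key (b : Fin 4) (f : Fin 4 → Fin 4 → ℝ) (d : Fin 4 → Fin 4 → Fin 4 → ℝ)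
    (hf : ∀ i j, f i j = - f j i) (hd : ∀ a i j, d a i j = - d a j i)
    (hM : ∀ k, ∑ a, E a a * d a a k = 0)
    (hBi : ∀ a b c, d a b c + d b c a + d c a b = 0) :
    ∑ a, E a a * ((∑ k, E k k * (d a a k * f k b + f a k * d a k b))
      - ((1/4) * E a b) * (∑ i, ∑ k, (E i i * E k k) * (d a i k * f k i + f i k * d a k i))) = 0 := by
  have hM' : ∀ k, d 0 0 k - d 1 1 k - d 2 2 k - d 3 3 k = 0 := by
    intro k
    have h := hM k
    simp only [Fin.sum_univ_four, E00, E11, E22, E33] at h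
    linarith
  fin_cases b <;>
    simp only [Fin.sum_univ_four, Fin.isValue, Fin.zero_eta, Fin.mk_one, Fin.reduceFinMk, E00, E01, E02, E03, E10, E11, E12, E13,
      E20, E21, E22, E23, E30, E31, E32, E33]
  · linear_combination (1 : ℝ) * f 0 0 * hM' 0 - (1 : ℝ) * f 1 0 * hM' 1 - (1 : ℝ) * f 2 0 * hM' 2 - (1 : ℝ) * f 3 0 * hM' 3 + (1/2 : ℝ) * f 0 0 * hBi 0 0 0 + (1/2 : ℝ) * f 0 0 * hd 0 0 0 - (1/4 : ℝ) * f 0 0 * hd 0 0 0 - (1/4 : ℝ) * d 0 0 0 * hf 0 0 - (1/2 : ℝ) * d 0 0 0 * hf 0 0 - (1/2 : ℝ) * f 0 1 * hBi 0 0 1 - (1/2 : ℝ) * f 0 1 * hd 0 1 0 + (1/4 : ℝ) * f 0 1 * hd 0 0 1 + (1/4 : ℝ) * d 0 0 1 * hf 0 1 + (1/2 : ℝ) * d 0 0 1 * hf 0 1 - (1/2 : ℝ) * f 0 2 * hBi 0 0 2 - (1/2 : ℝ) * f 0 2 * hd 0 2 0 + (1/4 : ℝ) * f 0 2 * hd 0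 0 2 + (1/4 : ℝ) * d 0 0 2 * hf 0 2 + (1/2 : ℝ) * d 0 0 2 * hf 0 2 - (1/2 : ℝ) * f 0 3 * hBi 0 0 3 - (1/2 : ℝ) * f 0 3 * hd 0 3 0 + (1/4 : ℝ) * f 0 3 * hd 0 0 3 + (1/4 : ℝ) * d 0 0 3 * hf 0 3 + (1/2 : ℝ) * d 0 0 3 * hf 0 3 - (1/2 : ℝ) * f 1 0 * hBi 0 1 0 - (1/2 : ℝ) * f 1 0 * hd 1 0 0 + (1/4 : ℝ) * f 1 0 * hd 0 1 0 + (1/4 : ℝ) * d 0 1 0 * hf 1 0 + (1/2 : ℝ) * d 1 0 0 * hf 1 0 + (1/2 : ℝ) * f 1 1 * hBi 0 1 1 + (1/2 : ℝ) * f 1 1 * hd 1 1 0 - (1/4 : ℝ) * f 1 1 * hd 0 1 1 - (1/4 : ℝ) * d 0 1 1 * hf 1 1 - (1/2 : ℝ) * d 1 0 1 * hf 1 1 + (1/2 : ℝ) * f 1 2 * hBi 0 1 2 + (1/2 : ℝ) * f 1 2 * hd 1 2 0 - (1/4 : ℝ) * f 1 2 * hd 0 1 2 - (1/4 : ℝ)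 * d 0 1 2 * hf 1 2 - (1/2 : ℝ) * d 1 0 2 * hf 1 2 + (1/2 : ℝ) * f 1 3 * hBi 0 1 3 + (1/2 : ℝ) * f 1 3 * hd 1 3 0 - (1/4 : ℝ) * f 1 3 * hd 0 1 3 - (1/4 : ℝ) * d 0 1 3 * hf 1 3 - (1/2 : ℝ) * d 1 0 3 * hf 1 3 - (1/2 : ℝ) * f 2 0 * hBi 0 2 0 - (1/2 : ℝ) * f 2 0 * hd 2 0 0 + (1/4 : ℝ) * f 2 0 * hd 0 2 0 + (1/4 : ℝ) * d 0 2 0 * hf 2 0 + (1/2 : ℝ) * d 2 0 0 * hf 2 0 + (1/2 : ℝ) * f 2 1 * hBi 0 2 1 + (1/2 : ℝ) * f 2 1 * hd 2 1 0 - (1/4 : ℝ) * f 2 1 * hd 0 2 1 - (1/4 : ℝ) * d 0 2 1 * hf 2 1 - (1/2 : ℝ) * d 2 0 1 * hf 2 1 + (1/2 : ℝ) * f 2 2 * hBi 0 2 2 + (1/2 : ℝ) * f 2 2 * hd 2 2 0 - (1/4 : ℝ) * f 2 2 * hd 0 2 2 - (1/4 : ℝ) * d 0 2 2 * hf 2 2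 - (1/2 : ℝ) * d 2 0 2 * hf 2 2 + (1/2 : ℝ) * f 2 3 * hBi 0 2 3 + (1/2 : ℝ) * f 2 3 * hd 2 3 0 - (1/4 : ℝ) * f 2 3 * hd 0 2 3 - (1/4 : ℝ) * d 0 2 3 * hf 2 3 - (1/2 : ℝ) * d 2 0 3 * hf 2 3 - (1/2 : ℝ) * f 3 0 * hBi 0 3 0 - (1/2 : ℝ) * f 3 0 * hd 3 0 0 + (1/4 : ℝ) * f 3 0 * hd 0 3 0 + (1/4 : ℝ) * d 0 3 0 * hf 3 0 + (1/2 : ℝ) * d 3 0 0 * hf 3 0 + (1/2 : ℝ) * f 3 1 * hBi 0 3 1 + (1/2 : ℝ) * f 3 1 * hd 3 1 0 - (1/4 : ℝ) * f 3 1 * hd 0 3 1 - (1/4 : ℝ) * d 0 3 1 * hf 3 1 - (1/2 : ℝ) * d 3 0 1 * hf 3 1 + (1/2 : ℝ) * f 3 2 * hBi 0 3 2 + (1/2 : ℝ) * f 3 2 * hd 3 2 0 - (1/4 : ℝ) * f 3 2 * hd 0 3 2 - (1/4 : ℝ) * d 0 3 2 * hf 3 2 - (1/2 : ℝ) * d 3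 0 2 * hf 3 2 + (1/2 : ℝ) * f 3 3 * hBi 0 3 3 + (1/2 : ℝ) * f 3 3 * hd 3 3 0 - (1/4 : ℝ) * f 3 3 * hd 0 3 3 - (1/4 : ℝ) * d 0 3 3 * hf 3 3 - (1/2 : ℝ) * d 3 0 3 * hf 3 3
  · linear_combination (1 : ℝ) * f 0 1 * hM' 0 - (1 : ℝ) * f 1 1 * hM' 1 - (1 : ℝ) * f 2 1 * hM' 2 - (1 : ℝ) * f 3 1 * hM' 3 + (1/2 : ℝ) * f 0 0 * hBi 1 0 0 + (1/2 : ℝ) * f 0 0 * hd 0 0 1 - (1/4 : ℝ) * f 0 0 * hd 1 0 0 - (1/4 : ℝ) * d 1 0 0 * hf 0 0 - (1/2 : ℝ) * d 0 1 0 * hf 0 0 - (1/2 : ℝ) * f 0 1 * hBi 1 0 1 - (1/2 : ℝ) * f 0 1 * hd 0 1 1 + (1/4 : ℝ) * f 0 1 * hd 1 0 1 + (1/4 : ℝ) * d 1 0 1 * hf 0 1 + (1/2 : ℝ) * d 0 1 1 * hf 0 1 - (1/2 : ℝ) * f 0 2 * hBi 1 0 2 - (1/2 : ℝ) * f 0 2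 * hd 0 2 1 + (1/4 : ℝ) * f 0 2 * hd 1 0 2 + (1/4 : ℝ) * d 1 0 2 * hf 0 2 + (1/2 : ℝ) * d 0 1 2 * hf 0 2 - (1/2 : ℝ) * f 0 3 * hBi 1 0 3 - (1/2 : ℝ) * f 0 3 * hd 0 3 1 + (1/4 : ℝ) * f 0 3 * hd 1 0 3 + (1/4 : ℝ) * d 1 0 3 * hf 0 3 + (1/2 : ℝ) * d 0 1 3 * hf 0 3 - (1/2 : ℝ) * f 1 0 * hBi 1 1 0 - (1/2 : ℝ) * f 1 0 * hd 1 0 1 + (1/4 : ℝ) * f 1 0 * hd 1 1 0 + (1/4 : ℝ) * d 1 1 0 * hf 1 0 + (1/2 : ℝ) * d 1 1 0 * hf 1 0 + (1/2 : ℝ) * f 1 1 * hBi 1 1 1 + (1/2 : ℝ) * f 1 1 * hd 1 1 1 - (1/4 : ℝ) * f 1 1 * hd 1 1 1 - (1/4 : ℝ) * d 1 1 1 * hf 1 1 - (1/2 : ℝ) * d 1 1 1 * hf 1 1 + (1/2 : ℝ) * f 1 2 * hBi 1 1 2 + (1/2 : ℝ) * f 1 2 * hd 1 2 1 - (1/4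 : ℝ) * f 1 2 * hd 1 1 2 - (1/4 : ℝ) * d 1 1 2 * hf 1 2 - (1/2 : ℝ) * d 1 1 2 * hf 1 2 + (1/2 : ℝ) * f 1 3 * hBi 1 1 3 + (1/2 : ℝ) * f 1 3 * hd 1 3 1 - (1/4 : ℝ) * f 1 3 * hd 1 1 3 - (1/4 : ℝ) * d 1 1 3 * hf 1 3 - (1/2 : ℝ) * d 1 1 3 * hf 1 3 - (1/2 : ℝ) * f 2 0 * hBi 1 2 0 - (1/2 : ℝ) * f 2 0 * hd 2 0 1 + (1/4 : ℝ) * f 2 0 * hd 1 2 0 + (1/4 : ℝ) * d 1 2 0 * hf 2 0 + (1/2 : ℝ) * d 2 1 0 * hf 2 0 + (1/2 : ℝ) * f 2 1 * hBi 1 2 1 + (1/2 : ℝ) * f 2 1 * hd 2 1 1 - (1/4 : ℝ) * f 2 1 * hd 1 2 1 - (1/4 : ℝ) * d 1 2 1 * hf 2 1 - (1/2 : ℝ) * d 2 1 1 * hf 2 1 + (1/2 : ℝ) * f 2 2 * hBi 1 2 2 + (1/2 : ℝ) * f 2 2 * hd 2 2 1 - (1/4 : ℝ) * f 2 2 * hd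 1 2 2 - (1/4 : ℝ) * d 1 2 2 * hf 2 2 - (1/2 : ℝ) * d 2 1 2 * hf 2 2 + (1/2 : ℝ) * f 2 3 * hBi 1 2 3 + (1/2 : ℝ) * f 2 3 * hd 2 3 1 - (1/4 : ℝ) * f 2 3 * hd 1 2 3 - (1/4 : ℝ) * d 1 2 3 * hf 2 3 - (1/2 : ℝ) * d 2 1 3 * hf 2 3 - (1/2 : ℝ) * f 3 0 * hBi 1 3 0 - (1/2 : ℝ) * f 3 0 * hd 3 0 1 + (1/4 : ℝ) * f 3 0 * hd 1 3 0 + (1/4 : ℝ) * d 1 3 0 * hf 3 0 + (1/2 : ℝ) * d 3 1 0 * hf 3 0 + (1/2 : ℝ) * f 3 1 * hBi 1 3 1 + (1/2 : ℝ) * f 3 1 * hd 3 1 1 - (1/4 : ℝ) * f 3 1 * hd 1 3 1 - (1/4 : ℝ) * d 1 3 1 * hf 3 1 - (1/2 : ℝ) * d 3 1 1 * hf 3 1 + (1/2 : ℝ) * f 3 2 * hBi 1 3 2 + (1/2 : ℝ) * f 3 2 * hd 3 2 1 - (1/4 : ℝ) * f 3 2 * hd 1 3 2 - (1/4 : ℝ)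 * d 1 3 2 * hf 3 2 - (1/2 : ℝ) * d 3 1 2 * hf 3 2 + (1/2 : ℝ) * f 3 3 * hBi 1 3 3 + (1/2 : ℝ) * f 3 3 * hd 3 3 1 - (1/4 : ℝ) * f 3 3 * hd 1 3 3 - (1/4 : ℝ) * d 1 3 3 * hf 3 3 - (1/2 : ℝ) * d 3 1 3 * hf 3 3
  · linear_combination (1 : ℝ) * f 0 2 * hM' 0 - (1 : ℝ) * f 1 2 * hM' 1 - (1 : ℝ) * f 2 2 * hM' 2 - (1 : ℝ) * f 3 2 * hM' 3 + (1/2 : ℝ) * f 0 0 * hBi 2 0 0 + (1/2 : ℝ) * f 0 0 * hd 0 0 2 - (1/4 : ℝ) * f 0 0 * hd 2 0 0 - (1/4 : ℝ) * d 2 0 0 * hf 0 0 - (1/2 : ℝ) * d 0 2 0 * hf 0 0 - (1/2 : ℝ) * f 0 1 * hBi 2 0 1 - (1/2 : ℝ) * f 0 1 * hd 0 1 2 + (1/4 : ℝ) * f 0 1 * hd 2 0 1 + (1/4 : ℝ) * d 2 0 1 * hf 0 1 + (1/2 : ℝ) * d 0 2 1 * hf 0 1 - (1/2 : ℝ) *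 f 0 2 * hBi 2 0 2 - (1/2 : ℝ) * f 0 2 * hd 0 2 2 + (1/4 : ℝ) * f 0 2 * hd 2 0 2 + (1/4 : ℝ) * d 2 0 2 * hf 0 2 + (1/2 : ℝ) * d 0 2 2 * hf 0 2 - (1/2 : ℝ) * f 0 3 * hBi 2 0 3 - (1/2 : ℝ) * f 0 3 * hd 0 3 2 + (1/4 : ℝ) * f 0 3 * hd 2 0 3 + (1/4 : ℝ) * d 2 0 3 * hf 0 3 + (1/2 : ℝ) * d 0 2 3 * hf 0 3 - (1/2 : ℝ) * f 1 0 * hBi 2 1 0 - (1/2 : ℝ) * f 1 0 * hd 1 0 2 + (1/4 : ℝ) * f 1 0 * hd 2 1 0 + (1/4 : ℝ) * d 2 1 0 * hf 1 0 + (1/2 : ℝ) * d 1 2 0 * hf 1 0 + (1/2 : ℝ) * f 1 1 * hBi 2 1 1 + (1/2 : ℝ) * f 1 1 * hd 1 1 2 - (1/4 : ℝ) * f 1 1 * hd 2 1 1 - (1/4 : ℝ) * d 2 1 1 * hf 1 1 - (1/2 : ℝ) * d 1 2 1 * hf 1 1 + (1/2 : ℝ) * f 1 2 * hBi 2 1 2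 + (1/2 : ℝ) * f 1 2 * hd 1 2 2 - (1/4 : ℝ) * f 1 2 * hd 2 1 2 - (1/4 : ℝ) * d 2 1 2 * hf 1 2 - (1/2 : ℝ) * d 1 2 2 * hf 1 2 + (1/2 : ℝ) * f 1 3 * hBi 2 1 3 + (1/2 : ℝ) * f 1 3 * hd 1 3 2 - (1/4 : ℝ) * f 1 3 * hd 2 1 3 - (1/4 : ℝ) * d 2 1 3 * hf 1 3 - (1/2 : ℝ) * d 1 2 3 * hf 1 3 - (1/2 : ℝ) * f 2 0 * hBi 2 2 0 - (1/2 : ℝ) * f 2 0 * hd 2 0 2 + (1/4 : ℝ) * f 2 0 * hd 2 2 0 + (1/4 : ℝ) * d 2 2 0 * hf 2 0 + (1/2 : ℝ) * d 2 2 0 * hf 2 0 + (1/2 : ℝ) * f 2 1 * hBi 2 2 1 + (1/2 : ℝ) * f 2 1 * hd 2 1 2 - (1/4 : ℝ) * f 2 1 * hd 2 2 1 - (1/4 : ℝ) * d 2 2 1 * hf 2 1 - (1/2 : ℝ) * d 2 2 1 * hf 2 1 + (1/2 : ℝ) * f 2 2 * hBi 2 2 2 + (1/2 : ℝ) * f 2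 2 * hd 2 2 2 - (1/4 : ℝ) * f 2 2 * hd 2 2 2 - (1/4 : ℝ) * d 2 2 2 * hf 2 2 - (1/2 : ℝ) * d 2 2 2 * hf 2 2 + (1/2 : ℝ) * f 2 3 * hBi 2 2 3 + (1/2 : ℝ) * f 2 3 * hd 2 3 2 - (1/4 : ℝ) * f 2 3 * hd 2 2 3 - (1/4 : ℝ) * d 2 2 3 * hf 2 3 - (1/2 : ℝ) * d 2 2 3 * hf 2 3 - (1/2 : ℝ) * f 3 0 * hBi 2 3 0 - (1/2 : ℝ) * f 3 0 * hd 3 0 2 + (1/4 : ℝ) * f 3 0 * hd 2 3 0 + (1/4 : ℝ) * d 2 3 0 * hf 3 0 + (1/2 : ℝ) * d 3 2 0 * hf 3 0 + (1/2 : ℝ) * f 3 1 * hBi 2 3 1 + (1/2 : ℝ) * f 3 1 * hd 3 1 2 - (1/4 : ℝ) * f 3 1 * hd 2 3 1 - (1/4 : ℝ) * d 2 3 1 * hf 3 1 - (1/2 : ℝ) * d 3 2 1 * hf 3 1 + (1/2 : ℝ) * f 3 2 * hBi 2 3 2 + (1/2 : ℝ) * f 3 2 * hd 3 2 2 - (1/4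 : ℝ) * f 3 2 * hd 2 3 2 - (1/4 : ℝ) * d 2 3 2 * hf 3 2 - (1/2 : ℝ) * d 3 2 2 * hf 3 2 + (1/2 : ℝ) * f 3 3 * hBi 2 3 3 + (1/2 : ℝ) * f 3 3 * hd 3 3 2 - (1/4 : ℝ) * f 3 3 * hd 2 3 3 - (1/4 : ℝ) * d 2 3 3 * hf 3 3 - (1/2 : ℝ) * d 3 2 3 * hf 3 3
  · linear_combination (1 : ℝ) * f 0 3 * hM' 0 - (1 : ℝ) * f 1 3 * hM' 1 - (1 : ℝ) * f 2 3 * hM' 2 - (1 : ℝ) * f 3 3 * hM' 3 + (1/2 : ℝ) * f 0 0 * hBi 3 0 0 + (1/2 : ℝ) * f 0 0 * hd 0 0 3 - (1/4 : ℝ) * f 0 0 * hd 3 0 0 - (1/4 : ℝ) * d 3 0 0 * hf 0 0 - (1/2 : ℝ) * d 0 3 0 * hf 0 0 - (1/2 : ℝ) * f 0 1 * hBi 3 0 1 - (1/2 : ℝ) * f 0 1 * hd 0 1 3 + (1/4 : ℝ) * f 0 1 * hd 3 0 1 + (1/4 : ℝ) * d 3 0 1 * hf 0 1 + (1/2 :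 ℝ) * d 0 3 1 * hf 0 1 - (1/2 : ℝ) * f 0 2 * hBi 3 0 2 - (1/2 : ℝ) * f 0 2 * hd 0 2 3 + (1/4 : ℝ) * f 0 2 * hd 3 0 2 + (1/4 : ℝ) * d 3 0 2 * hf 0 2 + (1/2 : ℝ) * d 0 3 2 * hf 0 2 - (1/2 : ℝ) * f 0 3 * hBi 3 0 3 - (1/2 : ℝ) * f 0 3 * hd 0 3 3 + (1/4 : ℝ) * f 0 3 * hd 3 0 3 + (1/4 : ℝ) * d 3 0 3 * hf 0 3 + (1/2 : ℝ) * d 0 3 3 * hf 0 3 - (1/2 : ℝ) * f 1 0 * hBi 3 1 0 - (1/2 : ℝ) * f 1 0 * hd 1 0 3 + (1/4 : ℝ) * f 1 0 * hd 3 1 0 + (1/4 : ℝ) * d 3 1 0 * hf 1 0 + (1/2 : ℝ) * d 1 3 0 * hf 1 0 + (1/2 : ℝ) * f 1 1 * hBi 3 1 1 + (1/2 : ℝ) * f 1 1 * hd 1 1 3 - (1/4 : ℝ) * f 1 1 * hd 3 1 1 - (1/4 : ℝ) * d 3 1 1 * hf 1 1 - (1/2 : ℝ) * d 1 3 1 *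 hf 1 1 + (1/2 : ℝ) * f 1 2 * hBi 3 1 2 + (1/2 : ℝ) * f 1 2 * hd 1 2 3 - (1/4 : ℝ) * f 1 2 * hd 3 1 2 - (1/4 : ℝ) * d 3 1 2 * hf 1 2 - (1/2 : ℝ) * d 1 3 2 * hf 1 2 + (1/2 : ℝ) * f 1 3 * hBi 3 1 3 + (1/2 : ℝ) * f 1 3 * hd 1 3 3 - (1/4 : ℝ) * f 1 3 * hd 3 1 3 - (1/4 : ℝ) * d 3 1 3 * hf 1 3 - (1/2 : ℝ) * d 1 3 3 * hf 1 3 - (1/2 : ℝ) * f 2 0 * hBi 3 2 0 - (1/2 : ℝ) * f 2 0 * hd 2 0 3 + (1/4 : ℝ) * f 2 0 * hd 3 2 0 + (1/4 : ℝ) * d 3 2 0 * hf 2 0 + (1/2 : ℝ) * d 2 3 0 * hf 2 0 + (1/2 : ℝ) * f 2 1 * hBi 3 2 1 + (1/2 : ℝ) * f 2 1 * hd 2 1 3 - (1/4 : ℝ) * f 2 1 * hd 3 2 1 - (1/4 : ℝ) * d 3 2 1 * hf 2 1 - (1/2 : ℝ) * d 2 3 1 * hf 2 1 + (1/2 : ℝ)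 * f 2 2 * hBi 3 2 2 + (1/2 : ℝ) * f 2 2 * hd 2 2 3 - (1/4 : ℝ) * f 2 2 * hd 3 2 2 - (1/4 : ℝ) * d 3 2 2 * hf 2 2 - (1/2 : ℝ) * d 2 3 2 * hf 2 2 + (1/2 : ℝ) * f 2 3 * hBi 3 2 3 + (1/2 : ℝ) * f 2 3 * hd 2 3 3 - (1/4 : ℝ) * f 2 3 * hd 3 2 3 - (1/4 : ℝ) * d 3 2 3 * hf 2 3 - (1/2 : ℝ) * d 2 3 3 * hf 2 3 - (1/2 : ℝ) * f 3 0 * hBi 3 3 0 - (1/2 : ℝ) * f 3 0 * hd 3 0 3 + (1/4 : ℝ) * f 3 0 * hd 3 3 0 + (1/4 : ℝ) * d 3 3 0 * hf 3 0 + (1/2 : ℝ) * d 3 3 0 * hf 3 0 + (1/2 : ℝ) * f 3 1 * hBi 3 3 1 + (1/2 : ℝ) * f 3 1 * hd 3 1 3 - (1/4 : ℝ) * f 3 1 * hd 3 3 1 - (1/4 : ℝ) * d 3 3 1 * hf 3 1 - (1/2 : ℝ) * d 3 3 1 * hf 3 1 + (1/2 : ℝ) * f 3 2 * hBi 3 3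 2 + (1/2 : ℝ) * f 3 2 * hd 3 2 3 - (1/4 : ℝ) * f 3 2 * hd 3 3 2 - (1/4 : ℝ) * d 3 3 2 * hf 3 2 - (1/2 : ℝ) * d 3 3 2 * hf 3 2 + (1/2 : ℝ) * f 3 3 * hBi 3 3 3 + (1/2 : ℝ) * f 3 3 * hd 3 3 3 - (1/4 : ℝ) * f 3 3 * hd 3 3 3 - (1/4 : ℝ) * d 3 3 3 * hf 3 3 - (1/2 : ℝ) * d 3 3 3 * hf 3 3

lemma pd_add (a : Fin 4) {f g : Vec4 → ℝ} {p : Vec4} (hf : DifferentiableAt ℝ f p)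
    (hg : DifferentiableAt ℝ g p) :
    pd a (fun q => f q + g q) p = pd a f p + pd a g p := by
  unfold pd; rw [fderiv_fun_add hf hg]; simp

lemma pd_sub (a : Fin 4) {f g : Vec4 → ℝ} {p : Vec4} (hf : DifferentiableAt ℝ f p)
    (hg : DifferentiableAt ℝ g p) :
    pd a (fun q => f q - g q) p = pd a f p - pd a g p := by
  unfold pd; rw [fderiv_fun_sub hf hg]; simp

lemma pd_neg (a : Fin 4) {f : Vec4 → ℝ} {p : Vec4} :
    pd a (fun q => -(f q)) p = - pd a f p := by
  unfold pd; rw [fderiv_fun_neg]; simp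

lemma pd_sum (a : Fin 4) {g : Fin 4 → Vec4 → ℝ} {p : Vec4}
    (hg : ∀ k, DifferentiableAt ℝ (g k) p) :
    pd a (fun q => ∑ k, g k q) p = ∑ k, pd a (g k) p := by
  unfold pd; rw [fderiv_fun_sum (fun i _ => hg i)]; simp

lemma pd_mul (a : Fin 4) {f g : Vec4 → ℝ} {p : Vec4} (hf : DifferentiableAt ℝ f p)
    (hg : DifferentiableAt ℝ g p) :
    pd a (fun q => f q * g q) p = pd a f p * g p + f p * pd a g p := by
  unfold pd; rw [fderiv_fun_mul hf hg]; simp; ring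

lemma pd_const_mul (a : Fin 4) (c : ℝ) {f : Vec4 → ℝ} {p : Vec4}
    (hf : DifferentiableAt ℝ f p) :
    pd a (fun q => c * f q) p = c * pd a f p := by
  unfold pd; rw [fderiv_const_mul hf]; simp

theorem maxwellT_divergence_free' (F : Vec4 → Mat4)
    (hsmooth : ∀ a b : Fin 4, ContDiff ℝ (⊤ : ℕ∞) fun p => F p a b)
    (hanti : ∀ p, (F p)ᵀ = -(F p))
    (hmax : SolvesMaxwell F) :
    ∀ (p : Vec4) (b : Fin 4),
      ∑ a, E a a * pd a (fun q => maxwellT (F q) a b) p = 0 := by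
  intro p b
  have hFd : ∀ i j, Differentiable ℝ (fun q => F q i j) :=
    fun i j => (hsmooth i j).differentiable (by simp)
  have hmul : ∀ (i j k l : Fin 4), DifferentiableAt ℝ (fun q => F q i j * F q k l) p :=
    fun i j k l => ((hFd i j) p).mul ((hFd k l) p)
  have hcm : ∀ (c : ℝ) (i j k l : Fin 4),
      DifferentiableAt ℝ (fun q => c * (F q i j * F q k l)) p :=
    fun c i j k l => (hmul i j k l).const_mul c
  -- antisymmetry facts
  have hanti' : ∀ q i j, F q i j = - F q j i := by
    intro q i j
    have h := congrFun (congrFun (hanti q) j) i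
    simpa [Matrix.transpose_apply, Matrix.neg_apply] using h
  have hf' : ∀ i j, F p i j = - F p j i := fun i j => hanti' p i j
  have hd' : ∀ (a i j : Fin 4),
      pd a (fun q => F q i j) p = - pd a (fun q => F q j i) p := by
    intro a i j
    have h1 : (fun q => F q i j) = (fun q => -(F q j i)) := by
      funext q; exact hanti' q i j
    rw [h1, pd_neg]
  -- entrywise formula for maxwellT
  have hT : ∀ r : Fin 4, (fun q => maxwellT (F q) r b)
      = fun q => (∑ k, E k k * (F q r k * F q k b))
        - ((1/4) * E r b) * (∑ i, ∑ k, (E i i * E k k) * (F q i k * F q k i)) := by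
    intro r
    funext q
    simp only [maxwellT, Matrix.sub_apply, Matrix.smul_apply, Matrix.mul_apply,
      Matrix.trace, Matrix.diag, smul_eq_mul, Fin.sum_univ_four,
      E00, E01, E02, E03, E10, E11, E12, E13, E20, E21, E22, E23, E30, E31, E32, E33]
    ring
  -- differentiability of the pieces
  have hsumA : ∀ r : Fin 4,
      DifferentiableAt ℝ (fun q => ∑ k, E k k * (F q r k * F q k b)) p :=
    fun r => DifferentiableAt.fun_sum (fun k _ => hcm (E k k) r k k b)
  have hsumInner : ∀ i : Fin 4,
      DifferentiableAt ℝ (fun q => ∑ k, (E i i * E k k) * (F q i k * F q k i)) p :=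
    fun i => DifferentiableAt.fun_sum (fun k _ => hcm (E i i * E k k) i k k i)
  have hsumB : DifferentiableAt ℝ
      (fun q => ∑ i, ∑ k, (E i i * E k k) * (F q i k * F q k i)) p :=
    DifferentiableAt.fun_sum (fun i _ => hsumInner i)
  -- derivative of each entry
  have hpdT : ∀ a r : Fin 4, pd a (fun q => maxwellT (F q) r b) p
      = (∑ k, E k k * (pd a (fun q => F q r k) p * F p k b
              + F p r k * pd a (fun q => F q k b) p))
        - ((1/4) * E r b) * (∑ i, ∑ k, (E i i * E k k)
            * (pd a (fun q => F q i k) p * F p k i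
              + F p i k * pd a (fun q => F q k i) p)) := by
    intro a r
    rw [hT r, pd_sub a (hsumA r) (hsumB.const_mul _), pd_const_mul a _ hsumB,
      pd_sum a (fun k => hcm (E k k) r k k b),
      pd_sum a (fun i => hsumInner i)]
    congr 1
    · refine Finset.sum_congr rfl fun k _ => ?_
      rw [pd_const_mul a _ (hmul r k k b), pd_mul a ((hFd r k) p) ((hFd k b) p)]
    · congr 1
      refine Finset.sum_congr rfl fun i _ => ?_
      rw [pd_sum a (fun k => hcm (E i i * E k k) i k k i)]
      refine Finset.sum_congr rfl fun k _ => ?_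
      rw [pd_const_mul a _ (hmul i k k i), pd_mul a ((hFd i k) p) ((hFd k i) p)]
  calc ∑ a, E a a * pd a (fun q => maxwellT (F q) a b) p
      = ∑ a, E a a * ((∑ k, E k k * (pd a (fun q => F q a k) p * F p k b
              + F p a k * pd a (fun q => F q k b) p))
        - ((1/4) * E a b) * (∑ i, ∑ k, (E i i * E k k)
            * (pd a (fun q => F q i k) p * F p k i
              + F p i k * pd a (fun q => F q k i) p))) :=
        Finset.sum_congr rfl fun a _ => by rw [hpdT a a]
    _ = 0 := key b (fun i j => F p i j) (fun a i j => pd a (fun q => F q i j) p)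
          hf' hd' (fun k => hmax.1 p k) (fun a b c => hmax.2 p a b c)

/-- The Maxwell stress-energy tensor is divergence-free on-shell. -/
theorem maxwellT_divergence_free (F : Vec4 → Mat4)
    (hsmooth : ∀ a b : Fin 4, ContDiff ℝ (⊤ : ℕ∞) fun p => F p a b)
    (hanti : ∀ p, (F p)ᵀ = -(F p))
    (hmax : SolvesMaxwell F) :
    ∀ (p : Vec4) (b : Fin 4),
      ∑ a, E a a * pd a (fun q => maxwellT (F q) a b) p = 0 :=
  maxwellT_divergence_free' F hsmooth hanti hmax
end
end

section
/- The Klein–Gordon stress-energy tensor satisfies the dominant energy condition pointwise: for every q ∈ ℝ⁴ and all reals v and m, the symmetric matrix T with entries T a b = q a * q b − (1/2) * E a b * (η(q,q) − m² * v²) satisfies the dominant energy condition. -/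
open Matrix MeasureTheory Filter Topology

noncomputable section

set_option maxHeartbeats 1000000 in
private theorem kg_scalar (A B P a b p u v w M : ℝ)
    (ha : 0 ≤ a) (hb : 0 ≤ b) (hp : 0 ≤ p) (hM : 0 ≤ M)
    (hA : a ≤ A^2) (hB : b ≤ B^2) (hA0 : 0 ≤ A) (hB0 : 0 ≤ B)
    (cs1 : v^2 ≤ a*p) (cs2 : w^2 ≤ b*p) (cs3 : u^2 ≤ a*b)
    (gram : 0 ≤ a*b*p + 2*u*v*w - a*w^2 - b*v^2 - p*u^2) :
    (1/2) * (A*B - u) * (P^2 - p - M) ≤ (A*P + v)*(B*P + w) := by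
  have habAB : a*b ≤ A^2*B^2 := by nlinarith
  have hu2 : u^2 ≤ A^2*B^2 := le_trans cs3 habAB
  have huAB : u ≤ A*B := by nlinarith [mul_nonneg hA0 hB0]
  have huAB' : -(A*B) ≤ u := by nlinarith [mul_nonneg hA0 hB0]
  have key : (1/2) * (A*B - u) * (P^2 - p) ≤ (A*P + v)*(B*P + w) := by
    rcases eq_or_lt_of_le huAB' with heq | hlt
    · -- u = -(A*B)
      subst heq
      have hab : a*b = A^2*B^2 := by nlinarith
      have habp : p*(a*b) - p*(A^2*B^2) = 0 := by rw [hab]; ring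
      have hs : A*w + B*v = 0 := by
        have h2 : (A*w + B*v)^2 ≤ 0 := by
          nlinarith [gram, habp,
            mul_nonneg (sub_nonneg.2 hA) (sub_nonneg.2 cs2),
            mul_nonneg (sub_nonneg.2 hB) (sub_nonneg.2 cs1),
            mul_nonneg hp (mul_nonneg (sq_nonneg A) (sub_nonneg.2 hB)),
            mul_nonneg hp (mul_nonneg (sq_nonneg B) (sub_nonneg.2 hA))]
        exact pow_eq_zero_iff two_ne_zero |>.1 (le_antisymm h2 (sq_nonneg _))
      rcases eq_or_lt_of_le hA0 with hA0' | hA0'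
      · -- A = 0
        have haz : a = 0 := le_antisymm (by rw [← hA0'] at hA; simpa using hA) ha
        have hvz : v = 0 := by
          have : v^2 ≤ 0 := by rw [haz] at cs1; simpa using cs1
          exact pow_eq_zero_iff two_ne_zero |>.1 (le_antisymm this (sq_nonneg v))
        rw [← hA0', hvz]; ring_nf; nlinarith [sq_nonneg P]
      · -- A > 0
        have h4 : v*(A*w) + B*v^2 = 0 := by linear_combination v * hs
        have h3 : 0 ≤ A*(v*w + A*B*p) := by
          nlinarith [h4, mul_nonneg hB0 (sub_nonneg.2 cs1),
            mul_nonneg (mul_nonneg hB0 hp) (sub_nonneg.2 hA)]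
        have hfin : 0 ≤ v*w + A*B*p := nonneg_of_mul_nonneg_right h3 hA0'
        have h5 : P*(A*w) + P*(B*v) = 0 := by linear_combination P * hs
        nlinarith [hfin, h5]
    · have disc : A^2*w^2 + B^2*v^2 - 2*u*v*w ≤ (A^2*B^2 - u^2)*p := by
        nlinarith [mul_nonneg (sub_nonneg.2 hA) (sub_nonneg.2 cs2),
          mul_nonneg (sub_nonneg.2 hB) (sub_nonneg.2 cs1),
          mul_nonneg hp (mul_nonneg (sub_nonneg.2 hA) (sub_nonneg.2 hB))]
      nlinarith [disc, sq_nonneg ((A*B+u)*P + (A*w + B*v)), hlt]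
  nlinarith [mul_nonneg (sub_nonneg.2 huAB) hM, key]

set_option maxHeartbeats 4000000 in
/-- The Klein–Gordon stress-energy tensor satisfies the DEC pointwise. -/
theorem kg_pointwise_dec (q : Vec4) (v m : ℝ) :
    DEC (Matrix.of fun a b =>
      q a * q b - (1/2 : ℝ) * E a b * (mink q q - m^2 * v^2)) := by
  intro ξ ζ hξ hζ
  obtain ⟨hξ1, hξ0⟩ := hξ
  obtain ⟨hζ1, hζ0⟩ := hζ
  rw [mink] at hξ1 hζ1
  have cs1 : (ξ 1 * q 1 + ξ 2 * q 2 + ξ 3 * q 3)^2 ≤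
      (ξ 1^2 + ξ 2^2 + ξ 3^2) * (q 1^2 + q 2^2 + q 3^2) := by
    nlinarith [sq_nonneg (ξ 1 * q 2 - ξ 2 * q 1), sq_nonneg (ξ 1 * q 3 - ξ 3 * q 1),
      sq_nonneg (ξ 2 * q 3 - ξ 3 * q 2)]
  have cs2 : (ζ 1 * q 1 + ζ 2 * q 2 + ζ 3 * q 3)^2 ≤
      (ζ 1^2 + ζ 2^2 + ζ 3^2) * (q 1^2 + q 2^2 + q 3^2) := by
    nlinarith [sq_nonneg (ζ 1 * q 2 - ζ 2 * q 1), sq_nonneg (ζ 1 * q 3 - ζ 3 * q 1),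
      sq_nonneg (ζ 2 * q 3 - ζ 3 * q 2)]
  have cs3 : (ξ 1 * ζ 1 + ξ 2 * ζ 2 + ξ 3 * ζ 3)^2 ≤
      (ξ 1^2 + ξ 2^2 + ξ 3^2) * (ζ 1^2 + ζ 2^2 + ζ 3^2) := by
    nlinarith [sq_nonneg (ξ 1 * ζ 2 - ξ 2 * ζ 1), sq_nonneg (ξ 1 * ζ 3 - ξ 3 * ζ 1),
      sq_nonneg (ξ 2 * ζ 3 - ξ 3 * ζ 2)]
  have gram : 0 ≤ (ξ 1^2 + ξ 2^2 + ξ 3^2) * (ζ 1^2 + ζ 2^2 + ζ 3^2) * (q 1^2 + q 2^2 + q 3^2)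
      + 2 * (ξ 1 * ζ 1 + ξ 2 * ζ 2 + ξ 3 * ζ 3) * (ξ 1 * q 1 + ξ 2 * q 2 + ξ 3 * q 3)
          * (ζ 1 * q 1 + ζ 2 * q 2 + ζ 3 * q 3)
      - (ξ 1^2 + ξ 2^2 + ξ 3^2) * (ζ 1 * q 1 + ζ 2 * q 2 + ζ 3 * q 3)^2
      - (ζ 1^2 + ζ 2^2 + ζ 3^2) * (ξ 1 * q 1 + ξ 2 * q 2 + ξ 3 * q 3)^2
      - (q 1^2 + q 2^2 + q 3^2) * (ξ 1 * ζ 1 + ξ 2 * ζ 2 + ξ 3 * ζ 3)^2 := by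
    have : (ξ 1^2 + ξ 2^2 + ξ 3^2) * (ζ 1^2 + ζ 2^2 + ζ 3^2) * (q 1^2 + q 2^2 + q 3^2)
      + 2 * (ξ 1 * ζ 1 + ξ 2 * ζ 2 + ξ 3 * ζ 3) * (ξ 1 * q 1 + ξ 2 * q 2 + ξ 3 * q 3)
          * (ζ 1 * q 1 + ζ 2 * q 2 + ζ 3 * q 3)
      - (ξ 1^2 + ξ 2^2 + ξ 3^2) * (ζ 1 * q 1 + ζ 2 * q 2 + ζ 3 * q 3)^2
      - (ζ 1^2 + ζ 2^2 + ζ 3^2) * (ξ 1 * q 1 + ξ 2 * q 2 + ξ 3 * q 3)^2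
      - (q 1^2 + q 2^2 + q 3^2) * (ξ 1 * ζ 1 + ξ 2 * ζ 2 + ξ 3 * ζ 3)^2
      = (ξ 1 * (ζ 2 * q 3 - ζ 3 * q 2) - ξ 2 * (ζ 1 * q 3 - ζ 3 * q 1)
          + ξ 3 * (ζ 1 * q 2 - ζ 2 * q 1))^2 := by ring
    rw [this]; positivity
  have key := kg_scalar (ξ 0) (ζ 0) (q 0)
    (ξ 1^2 + ξ 2^2 + ξ 3^2) (ζ 1^2 + ζ 2^2 + ζ 3^2) (q 1^2 + q 2^2 + q 3^2)
    (ξ 1 * ζ 1 + ξ 2 * ζ 2 + ξ 3 * ζ 3) (ξ 1 * q 1 + ξ 2 * q 2 + ξ 3 * q 3)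
    (ζ 1 * q 1 + ζ 2 * q 2 + ζ 3 * q 3) (m^2*v^2)
    (by positivity) (by positivity) (by positivity) (by positivity)
    (by nlinarith) (by nlinarith) hξ0 hζ0 cs1 cs2 cs3 gram
  have e00 : E 0 0 = 1 := by norm_num [E, Matrix.diagonal_apply]
  have e01 : E 0 1 = 0 := by rw [E, Matrix.diagonal_apply_ne _ (by decide)]
  have e02 : E 0 2 = 0 := by rw [E, Matrix.diagonal_apply_ne _ (by decide)]
  have e03 : E 0 3 = 0 := by rw [E, Matrix.diagonal_apply_ne _ (by decide)]
  have e10 : E 1 0 = 0 := by rw [E, Matrix.diagonal_apply_ne _ (by decide)]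
  have e11 : E 1 1 = -1 := by norm_num [E, Matrix.diagonal_apply]
  have e12 : E 1 2 = 0 := by rw [E, Matrix.diagonal_apply_ne _ (by decide)]
  have e13 : E 1 3 = 0 := by rw [E, Matrix.diagonal_apply_ne _ (by decide)]
  have e20 : E 2 0 = 0 := by rw [E, Matrix.diagonal_apply_ne _ (by decide)]
  have e21 : E 2 1 = 0 := by rw [E, Matrix.diagonal_apply_ne _ (by decide)]
  have e22 : E 2 2 = -1 := by norm_num [E, Matrix.diagonal_apply]; rfl
  have e23 : E 2 3 = 0 := by rw [E, Matrix.diagonal_apply_ne _ (by decide)]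
  have e30 : E 3 0 = 0 := by rw [E, Matrix.diagonal_apply_ne _ (by decide)]
  have e31 : E 3 1 = 0 := by rw [E, Matrix.diagonal_apply_ne _ (by decide)]
  have e32 : E 3 2 = 0 := by rw [E, Matrix.diagonal_apply_ne _ (by decide)]
  have e33 : E 3 3 = -1 := by norm_num [E, Matrix.diagonal_apply]; rfl
  simp only [Fin.sum_univ_four, Matrix.of_apply, e00, e01, e02, e03, e10, e11, e12, e13, e20, e21, e22, e23, e30, e31, e32, e33, mink]
  linarith [key]
end
end
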